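/- arXiv:1412.6958 — 2 statements merged into one kernel-verified Lean document; each statement's English description precedes it below -/
import Mathlib

section
/- Let x_1, x_2, x_3 ∈ ℝ² form a nondegenerate triangle (i.e., x_2 − x_1 and x_3 − x_1 are linearly independent). Then there exists an open neighborhood U of (x_1, x_2) in ℝ⁴ and a unique smooth map ξ: U → ℝ² such that ξ(x_1, x_2) = x_3 and, for every (x'_1, x'_2) ∈ U, ‖ξ(x'_1,x'_2) − x'_1‖ = ‖x_3 − x_1‖ and ‖ξ(x'_1,x'_2) − x'_2‖ = ‖x_3 − x_2‖. -/
open scoped BigOperators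

noncomputable section

/-- Points in the Euclidean plane. -/
abbrev Pt : Type := EuclideanSpace ℝ (Fin 2)

/-- The flattened space of planar configurations indexed by `ι`
(two real coordinates for each vertex). -/
abbrev Conf (ι : Type*) : Type _ := EuclideanSpace ℝ (ι × Fin 2)

/-- The position of agent `i` in the configuration `p`. -/
def pt {ι : Type*} (p : Conf ι) (i : ι) : Pt := WithLp.toLp 2 (fun c => p (i, c))

/-- The sub-configuration of `p` on the vertices in `S`. -/
def restr {ι : Type*} (S : Set ι) (p : Conf ι) : Conf ↥S := WithLp.toLp 2 (fun ic => p ((ic.1 : ι), ic.2))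

/-- The configuration space `P_G`: embeddings of the vertex set in the plane for which
adjacent vertices have distinct positions. -/
def configSpace {ι : Type*} (G : SimpleGraph ι) : Set (Conf ι) :=
  {p | ∀ i j : ι, G.Adj i j → pt p i ≠ pt p j}

/-- A Henneberg sequence for a triangulated Laman graph `G`, encoded by the order
`ord` in which the vertices appear, and for every step `l ≥ 2` the two earlier steps
`par1 l`, `par2 l`, whose (adjacent) vertices the new vertex `ord l` is joined to.
The edges of `G` are exactly the initial edge together with the edges created at
each step. -/
structure Henneberg {ι : Type*} (G : SimpleGraph ι) : Type _ where
  two_le : 2 ≤ Nat.card ι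
  ord : Fin (Nat.card ι) ≃ ι
  par1 : Fin (Nat.card ι) → Fin (Nat.card ι)
  par2 : Fin (Nat.card ι) → Fin (Nat.card ι)
  par1_lt : ∀ l : Fin (Nat.card ι), 2 ≤ (l : ℕ) → par1 l < l
  par2_lt : ∀ l : Fin (Nat.card ι), 2 ≤ (l : ℕ) → par2 l < l
  par_ne : ∀ l : Fin (Nat.card ι), 2 ≤ (l : ℕ) → par1 l ≠ par2 l
  par_adj : ∀ l : Fin (Nat.card ι), 2 ≤ (l : ℕ) → G.Adj (ord (par1 l)) (ord (par2 l))
  edge_iff : ∀ i j : ι, G.Adj i j ↔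
    (s(i, j) = s(ord ⟨0, by omega⟩, ord ⟨1, by omega⟩) ∨
      ∃ l : Fin (Nat.card ι), 2 ≤ (l : ℕ) ∧
        (s(i, j) = s(ord (par1 l), ord l) ∨ s(i, j) = s(ord (par2 l), ord l)))

/-- A graph is a triangulated Laman graph if it is (essentially) a single vertex, or
it can be built by a Henneberg sequence in which each new vertex is joined to the two
endpoints of an existing edge. -/
def IsTriangulatedLaman {ι : Type*} (G : SimpleGraph ι) : Prop :=
  Nat.card ι ≤ 1 ∨ Nonempty (Henneberg G)

open Classical in
/-- The potential `Φ` induced by `G`, with control laws `f i j = u_{ij}(⬝, d̄_{ij})`: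
`Φ(p) = Σ_{(i,j) ∈ E} ∫_1^{‖x_i - x_j‖} s u_{ij}(s, d̄_{ij}) ds`
(each edge is counted once; the double sum counts it twice, whence the factor 1/2). -/
def potential {ι : Type*} [Fintype ι] (G : SimpleGraph ι) (f : ι → ι → ℝ → ℝ)
    (p : Conf ι) : ℝ :=
  (1 / 2) * ∑ i : ι, ∑ j : ι,
    if G.Adj i j then ∫ s in (1 : ℝ)..(dist (pt p i) (pt p j)), s * f i j s else 0

open Classical in
/-- The right-hand side of the formation control system
`ẋ_i = Σ_{j ∈ N_i} u_{ij}(‖x_i - x_j‖, d̄_{ij}) (x_j - x_i)`. -/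
def formationField {ι : Type*} [Fintype ι] (G : SimpleGraph ι) (f : ι → ι → ℝ → ℝ)
    (p : Conf ι) : Conf ι :=
  WithLp.toLp 2 (fun ic => ∑ j : ι,
    if G.Adj ic.1 j then f ic.1 j (dist (pt p ic.1) (pt p j)) * (p (j, ic.2) - p (ic.1, ic.2))
    else 0)

/-- A monotone attraction/repulsion function: `f` is C¹ on `ℝ_{>0}`,
`d(x f(x))/dx > 0` for `x > 0`, `f` has a unique (positive) zero, and
`∫_x^1 s f(s) ds → -∞` as `x → 0⁺`. -/
structure IsMonoAttRep (f : ℝ → ℝ) : Prop where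
  contDiff : ContDiffOn ℝ 1 f (Set.Ioi 0)
  deriv_pos : ∀ x : ℝ, 0 < x → 0 < deriv (fun y => y * f y) x
  unique_zero : ∃! x : ℝ, 0 < x ∧ f x = 0
  collision : Filter.Tendsto (fun x : ℝ => ∫ s in x..(1 : ℝ), s * f s)
    (nhdsWithin 0 (Set.Ioi 0)) Filter.atBot

/-- 2×2 rotation matrices. -/
def IsRotation (θ : Matrix (Fin 2) (Fin 2) ℝ) : Prop := θ * θ.transpose = 1 ∧ θ.det = 1

/-- The action of `γ = (θ, v) ∈ SE(2)` on configurations: `γ·p = (θ x_1 + v, …, θ x_n + v)`. -/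
def se2Act {ι : Type*} (θ : Matrix (Fin 2) (Fin 2) ℝ) (v : Pt) (p : Conf ι) : Conf ι :=
  WithLp.toLp 2 (fun ic => θ.mulVec (pt p ic.1).ofLp ic.2 + v ic.2)

/-- The SE(2)-orbit `O_p` of a configuration `p`. -/
def se2Orbit {ι : Type*} (p : Conf ι) : Set (Conf ι) :=
  {q | ∃ θ v, IsRotation θ ∧ q = se2Act θ v p}

/-- Rotation by 90 degrees. -/
def rotJ : Matrix (Fin 2) (Fin 2) ℝ := !![0, -1; 1, 0]

/-- The infinitesimal rotation of a configuration. -/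
def infRot {ι : Type*} (p : Conf ι) : Conf ι := WithLp.toLp 2 (fun ic => rotJ.mulVec (pt p ic.1).ofLp ic.2)

/-- The infinitesimal translation in coordinate direction `c`. -/
def transl (ι : Type*) (c : Fin 2) : Conf ι := WithLp.toLp 2 (fun ic => if ic.2 = c then 1 else 0)

/-- The tangent space at `p` of the SE(2)-orbit `O_p`. -/
def orbitTangent {ι : Type*} (p : Conf ι) : Submodule ℝ (Conf ι) :=
  Submodule.span ℝ {infRot p, transl ι 0, transl ι 1}

/-- The Hessian matrix `H_p = ∂²Φ(p)/∂p²`. -/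
def hessianMat {ι : Type*} [Fintype ι] [DecidableEq ι] (Φ : Conf ι → ℝ) (p : Conf ι) :
    Matrix (ι × Fin 2) (ι × Fin 2) ℝ :=
  Matrix.of fun a b =>
    iteratedFDeriv ℝ 2 Φ p ![EuclideanSpace.single a 1, EuclideanSpace.single b 1]

/-- The Hessian of `Φ` at `p` with respect to the coordinates of the vertices in `S`
(for `Φ` depending only on those coordinates this is the Hessian of the induced
function of the positions of the vertices in `S`). -/
def hessianMatOn {ι : Type*} [Fintype ι] [DecidableEq ι] (Φ : Conf ι → ℝ) (p : Conf ι) (S : Set ι) :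
    Matrix (↥S × Fin 2) (↥S × Fin 2) ℝ :=
  Matrix.of fun a b => hessianMat Φ p ((a.1 : ι), a.2) ((b.1 : ι), b.2)

open Classical in
/-- `N₊(A)`: the number of positive eigenvalues of a real symmetric matrix,
counted with multiplicity. -/
def nPos {m : Type*} [Finite m] (A : Matrix m m ℝ) : ℕ :=
  letI := Fintype.ofFinite m
  letI := Classical.decEq m
  if h : A.IsHermitian then Fintype.card {i // 0 < h.eigenvalues i} else 0

open Classical in
/-- `N₋(A)`: the number of negative eigenvalues of a real symmetric matrix,
counted with multiplicity. -/
def nNeg {m : Type*} [Finite m] (A : Matrix m m ℝ) : ℕ :=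
  letI := Fintype.ofFinite m
  letI := Classical.decEq m
  if h : A.IsHermitian then Fintype.card {i // h.eigenvalues i < 0} else 0

open Classical in
/-- `N₀(A)`: the number of zero eigenvalues of a real symmetric matrix,
counted with multiplicity. -/
def nZero {m : Type*} [Finite m] (A : Matrix m m ℝ) : ℕ :=
  letI := Fintype.ofFinite m
  letI := Classical.decEq m
  if h : A.IsHermitian then Fintype.card {i // h.eigenvalues i = 0} else 0

/-- `Φ` is an equivariant Morse function on `P_G`: it has finitely many critical orbits,
and each critical orbit is nondegenerate (the Hessian has exactly three zero eigenvalues). -/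
def IsEquivariantMorse {ι : Type*} [Fintype ι] [DecidableEq ι] (G : SimpleGraph ι)
    (Φ : Conf ι → ℝ) : Prop :=
  {O : Set (Conf ι) | ∃ p ∈ configSpace G, gradient Φ p = 0 ∧ O = se2Orbit p}.Finite ∧
  ∀ p ∈ configSpace G, gradient Φ p = 0 → nZero (hessianMat Φ p) = 3

/-- `i`, `j`, `k` form a 3-cycle of `G`. -/
def Is3Cycle {ι : Type*} (G : SimpleGraph ι) (i j k : ι) : Prop :=
  G.Adj i j ∧ G.Adj i k ∧ G.Adj j k

/-- A framework `(G, p)` is strongly rigid if every 3-cycle of `G` is embedded by `p`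
as a nondegenerate triangle. -/
def StronglyRigid {ι : Type*} (G : SimpleGraph ι) (p : Conf ι) : Prop :=
  ∀ i j k : ι, Is3Cycle G i j k →
    LinearIndependent ℝ ![pt p j - pt p i, pt p k - pt p i]

/-- The target distances satisfy the strict triangle inequalities associated with `G`. -/
def StrictTriangleIneqs {ι : Type*} (G : SimpleGraph ι) (dbar : ι → ι → ℝ) : Prop :=
  ∀ i j k : ι, Is3Cycle G i j k →
    dbar j k < dbar i j + dbar i k ∧ dbar i k < dbar i j + dbar j k ∧
      dbar i j < dbar i k + dbar j k

/-- A triangulated formation system: a formation control system induced by a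
triangulated Laman graph, with target distances satisfying the strict triangle
inequalities, monotone attraction/repulsion control laws vanishing at the target
distances, and whose potential is an equivariant Morse function. -/
structure IsTriFormation {ι : Type*} [Fintype ι] [DecidableEq ι] (G : SimpleGraph ι)
    (f : ι → ι → ℝ → ℝ) (dbar : ι → ι → ℝ) : Prop where
  laman : IsTriangulatedLaman G
  fsymm : ∀ i j, f i j = f j i
  dsymm : ∀ i j, dbar i j = dbar j i
  dpos : ∀ i j, G.Adj i j → 0 < dbar i j
  mono : ∀ i j, G.Adj i j → IsMonoAttRep (f i j)
  fzero : ∀ i j, G.Adj i j → f i j (dbar i j) = 0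
  triangle : StrictTriangleIneqs G dbar
  morse : IsEquivariantMorse G (potential G f)

/-- The (critical) orbit of `p` is exponentially stable: the Hessian of `Φ` at `p` has
exactly three zero eigenvalues and no negative eigenvalues (all the others positive). -/
def ExpStableAt {ι : Type*} [Fintype ι] [DecidableEq ι] (Φ : Conf ι → ℝ) (p : Conf ι) : Prop :=
  nZero (hessianMat Φ p) = 3 ∧ nNeg (hessianMat Φ p) = 0

/-- Generating relation for the independent partition: at each step `l ≥ 2` of the
Henneberg sequence in which the new vertex is aligned with its two parents, the two
new edges are related to the parent edge. -/
def triGen {ι : Type*} {G : SimpleGraph ι} (H : Henneberg G) (p : Conf ι) :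
    Sym2 ι → Sym2 ι → Prop := fun e e' =>
  ∃ l : Fin (Nat.card ι), 2 ≤ (l : ℕ) ∧
    Collinear ℝ {pt p (H.ord (H.par1 l)), pt p (H.ord (H.par2 l)), pt p (H.ord l)} ∧
    e' = s(H.ord (H.par1 l), H.ord (H.par2 l)) ∧
    (e = s(H.ord (H.par1 l), H.ord l) ∨ e = s(H.ord (H.par2 l), H.ord l))

/-- The independent partition of the edge set of `G` for the framework `(G, p)`,
computed along the Henneberg sequence `H`. -/
def indepPartition {ι : Type*} {G : SimpleGraph ι} (H : Henneberg G) (p : Conf ι) :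
    Set (Set (Sym2 ι)) :=
  {C | ∃ e ∈ G.edgeSet, C = {e' | e' ∈ G.edgeSet ∧ Relation.EqvGen (triGen H p) e e'}}

/-- The set `V_i` of vertices incident to the edges in a class `C`. -/
def classVerts {ι : Type*} (C : Set (Sym2 ι)) : Set ι := {v | ∃ e ∈ C, v ∈ e}

end

/-!
In an oriented Euclidean plane a point `z` is determined, relative to a base `a ≠ b`, by
`⟪b - a, z - a⟫` and the area form `ω (b - a) (z - a)`, through
`‖b - a‖² • (z - a) = ⟪b - a, z - a⟫ • (b - a) + ω (b - a) (z - a) • J (b - a)`.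
The conditions `|za| = r₁`, `|zb| = r₂` fix the inner product and, by Lagrange's identity
`⟪u, v⟫² + (ω u v)² = ‖u‖² ‖v‖²`, the square `T` of the area form, both as polynomials in
`‖b - a‖`. So the solutions are the two apexes with `ω = ±√T`, smooth wherever `T > 0`, and
`T > 0` at `(x₁, x₂)` is the nondegeneracy of the triangle. On a ball where `T` stays positive,
`ω (b - a) (ξ - a)` never vanishes for a continuous solution `ξ`, so by connectedness its sign
is that at `(x₁, x₂)`, which pins `ξ` to the apex on the side of `x₃`.
-/

open scoped RealInnerProductSpace
open Module

section Apex

variable {E : Type*} [NormedAddCommGroup E]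

noncomputable def apexInner (r₁ r₂ : ℝ) (a b : E) : ℝ := (‖b - a‖ ^ 2 + r₁ ^ 2 - r₂ ^ 2) / 2

noncomputable def apexAreaSq (r₁ r₂ : ℝ) (a b : E) : ℝ :=
  r₁ ^ 2 * ‖b - a‖ ^ 2 - apexInner r₁ r₂ a b ^ 2

theorem norm_sub_sq_ne_zero {a b : E} (hab : a ≠ b) : ‖b - a‖ ^ 2 ≠ 0 :=
  pow_ne_zero 2 (norm_ne_zero_iff.mpr (sub_ne_zero.mpr hab.symm))

theorem ne_of_apexAreaSq_pos {r₁ r₂ : ℝ} {a b : E} (h : 0 < apexAreaSq r₁ r₂ a b) : a ≠ b := by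
  rintro rfl
  simp only [apexAreaSq, sub_self, norm_zero] at h
  nlinarith [sq_nonneg (apexInner r₁ r₂ a a)]

variable [InnerProductSpace ℝ E]

section Smoothness

variable {n : WithTop ℕ∞} (r₁ r₂ : ℝ)

theorem contDiff_norm_snd_sub_fst_sq : ContDiff ℝ n fun y : E × E => ‖y.2 - y.1‖ ^ 2 :=
  (contDiff_snd.sub contDiff_fst).norm_sq ℝ

theorem contDiff_apexInner : ContDiff ℝ n fun y : E × E => apexInner r₁ r₂ y.1 y.2 :=
  ((contDiff_norm_snd_sub_fst_sq.add contDiff_const).sub contDiff_const).div_const 2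

theorem contDiff_apexAreaSq : ContDiff ℝ n fun y : E × E => apexAreaSq r₁ r₂ y.1 y.2 :=
  (contDiff_const.mul contDiff_norm_snd_sub_fst_sq).sub ((contDiff_apexInner r₁ r₂).pow 2)

end Smoothness

theorem norm_sub_sq_eq_norm_sub_sq_sub_inner (a b z : E) :
    ‖z - b‖ ^ 2 = ‖z - a‖ ^ 2 - 2 * ⟪b - a, z - a⟫ + ‖b - a‖ ^ 2 := by
  rw [show z - b = (z - a) - (b - a) by abel, norm_sub_sq_real, real_inner_comm]

theorem inner_sub_eq_apexInner_of_dist_eq {r₁ r₂ : ℝ} {a b z : E} (h₁ : dist z a = r₁)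
    (h₂ : dist z b = r₂) : ⟪b - a, z - a⟫ = apexInner r₁ r₂ a b := by
  rw [dist_eq_norm] at h₁ h₂
  rw [apexInner, ← h₁, ← h₂, norm_sub_sq_eq_norm_sub_sq_sub_inner a b z]
  ring

namespace Orientation

variable [Fact (finrank ℝ E = 2)] (o : Orientation ℝ E (Fin 2))

local notation "ω" => o.areaForm
local notation "J" => o.rightAngleRotation

theorem norm_sq_smul_eq_inner_smul_add_areaForm_smul (u v : E) :
    ‖u‖ ^ 2 • v = ⟪u, v⟫ • u + ω u v • J u := by
  refine ext_inner_right ℝ fun w => ?_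
  simp only [inner_add_left, real_inner_smul_left, inner_rightAngleRotation_left]
  rw [o.inner_mul_inner_add_areaForm_mul_areaForm]

theorem areaForm_ne_zero_of_linearIndependent {u v : E} (h : LinearIndependent ℝ ![u, v]) :
    ω u v ≠ 0 := by
  intro hω
  have hrel : ⟪u, v⟫ • u + (-‖u‖ ^ 2) • v = 0 := by
    rw [neg_smul, ← sub_eq_add_neg, o.norm_sq_smul_eq_inner_smul_add_areaForm_smul, hω,
      zero_smul, add_zero, sub_self]
  have hu : u ≠ 0 := by simpa using h.ne_zero 0
  exact hu (norm_eq_zero.mp (pow_eq_zero_iff two_ne_zero |>.mp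
    (neg_eq_zero.mp (LinearIndependent.pair_iff.mp h _ _ hrel).2)))

theorem areaForm_sq_eq_apexAreaSq_of_dist_eq {r₁ r₂ : ℝ} {a b z : E} (h₁ : dist z a = r₁)
    (h₂ : dist z b = r₂) : ω (b - a) (z - a) ^ 2 = apexAreaSq r₁ r₂ a b := by
  rw [apexAreaSq, ← inner_sub_eq_apexInner_of_dist_eq h₁ h₂, ← h₁, dist_eq_norm]
  linear_combination o.inner_sq_add_areaForm_sq (b - a) (z - a)

theorem dist_eq_and_dist_eq_iff {r₁ r₂ : ℝ} (hr₁ : 0 ≤ r₁) (hr₂ : 0 ≤ r₂) {a b : E}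
    (hab : a ≠ b) (z : E) :
    dist z a = r₁ ∧ dist z b = r₂ ↔
      ⟪b - a, z - a⟫ = apexInner r₁ r₂ a b ∧ ω (b - a) (z - a) ^ 2 = apexAreaSq r₁ r₂ a b := by
  refine ⟨fun ⟨h₁, h₂⟩ => ⟨inner_sub_eq_apexInner_of_dist_eq h₁ h₂,
    o.areaForm_sq_eq_apexAreaSq_of_dist_eq h₁ h₂⟩, fun ⟨hA, hT⟩ => ?_⟩
  have h₁ : ‖z - a‖ ^ 2 = r₁ ^ 2 := by
    refine mul_left_cancel₀ (norm_sub_sq_ne_zero hab) ?_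
    rw [← o.inner_sq_add_areaForm_sq, hA, hT, apexAreaSq]
    ring
  have h₂ : ‖z - b‖ ^ 2 = r₂ ^ 2 := by
    rw [norm_sub_sq_eq_norm_sub_sq_sub_inner a b z, h₁, hA, apexInner]
    ring
  rw [dist_eq_norm, dist_eq_norm]
  exact ⟨(pow_left_inj₀ (norm_nonneg _) hr₁ two_ne_zero).mp h₁,
    (pow_left_inj₀ (norm_nonneg _) hr₂ two_ne_zero).mp h₂⟩

-- `s = ±1` selects the side of the line `ab` on which the apex lies.
noncomputable def apex (s r₁ r₂ : ℝ) (a b : E) : E :=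
  a + (‖b - a‖ ^ 2)⁻¹ •
    (apexInner r₁ r₂ a b • (b - a) + (s * √(apexAreaSq r₁ r₂ a b)) • J (b - a))

variable {o}

theorem norm_sq_smul_apex_sub (s r₁ r₂ : ℝ) {a b : E} (hab : a ≠ b) :
    ‖b - a‖ ^ 2 • (o.apex s r₁ r₂ a b - a) =
      apexInner r₁ r₂ a b • (b - a) + (s * √(apexAreaSq r₁ r₂ a b)) • J (b - a) := by
  rw [apex, add_sub_cancel_left, smul_inv_smul₀ (norm_sub_sq_ne_zero hab)]

theorem eq_apex_of_dist_eq {s r₁ r₂ : ℝ} {a b z : E} (hab : a ≠ b) (h₁ : dist z a = r₁)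
    (h₂ : dist z b = r₂) (hs : ω (b - a) (z - a) = s * √(apexAreaSq r₁ r₂ a b)) :
    z = o.apex s r₁ r₂ a b := by
  rw [← sub_left_inj (a := a), ← smul_right_inj (norm_sub_sq_ne_zero hab),
    norm_sq_smul_apex_sub s r₁ r₂ hab,
    o.norm_sq_smul_eq_inner_smul_add_areaForm_smul, inner_sub_eq_apexInner_of_dist_eq h₁ h₂, hs]

theorem inner_apex_sub (s r₁ r₂ : ℝ) {a b : E} (hab : a ≠ b) :
    ⟪b - a, o.apex s r₁ r₂ a b - a⟫ = apexInner r₁ r₂ a b := by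
  refine mul_left_cancel₀ (norm_sub_sq_ne_zero hab) ?_
  rw [← real_inner_smul_right, norm_sq_smul_apex_sub s r₁ r₂ hab, inner_add_right,
    real_inner_smul_right, real_inner_smul_right, real_inner_self_eq_norm_sq,
    o.inner_rightAngleRotation_right, o.areaForm_apply_self]
  ring

theorem areaForm_apex_sub (s r₁ r₂ : ℝ) {a b : E} (hab : a ≠ b) :
    ω (b - a) (o.apex s r₁ r₂ a b - a) = s * √(apexAreaSq r₁ r₂ a b) := by
  refine mul_left_cancel₀ (norm_sub_sq_ne_zero hab) ?_
  rw [← smul_eq_mul, ← LinearMap.map_smul, norm_sq_smul_apex_sub s r₁ r₂ hab, map_add,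
    map_smul, map_smul, o.areaForm_apply_self, o.areaForm_rightAngleRotation_right,
    real_inner_self_eq_norm_sq, smul_eq_mul, smul_eq_mul]
  ring

theorem dist_apex {s r₁ r₂ : ℝ} (hs : s ^ 2 = 1) (hr₁ : 0 ≤ r₁) (hr₂ : 0 ≤ r₂) {a b : E}
    (hT : 0 < apexAreaSq r₁ r₂ a b) :
    dist (o.apex s r₁ r₂ a b) a = r₁ ∧ dist (o.apex s r₁ r₂ a b) b = r₂ := by
  have hab := ne_of_apexAreaSq_pos hT
  rw [o.dist_eq_and_dist_eq_iff hr₁ hr₂ hab, inner_apex_sub s r₁ r₂ hab,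
    areaForm_apex_sub s r₁ r₂ hab, mul_pow, hs, one_mul, Real.sq_sqrt hT.le]
  exact ⟨rfl, rfl⟩

theorem contDiffAt_apex {n : WithTop ℕ∞} (s r₁ r₂ : ℝ) {y : E × E}
    (hT : 0 < apexAreaSq r₁ r₂ y.1 y.2) :
    ContDiffAt ℝ n (fun y : E × E => o.apex s r₁ r₂ y.1 y.2) y := by
  have hsqrt : ContDiffAt ℝ n (fun y : E × E => √(apexAreaSq r₁ r₂ y.1 y.2)) y :=
    (contDiff_apexAreaSq r₁ r₂).contDiffAt.sqrt hT.ne'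
  have hsub : ContDiffAt ℝ n (fun y : E × E => y.2 - y.1) y :=
    contDiffAt_snd.sub contDiffAt_fst
  exact contDiffAt_fst.add <| (contDiff_norm_snd_sub_fst_sq.contDiffAt.inv
    (norm_sub_sq_ne_zero (ne_of_apexAreaSq_pos hT))).smul <|
    ((contDiff_apexInner r₁ r₂).contDiffAt.smul hsub).add
      ((contDiffAt_const.mul hsqrt).smul ((J : E →L[ℝ] E).contDiff.contDiffAt.comp y hsub))

theorem eqOn_apex_of_dist_eq {s r₁ r₂ : ℝ} (hs : s ^ 2 = 1) {U : Set (E × E)}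
    (hU : IsPreconnected U) (hT : ∀ y ∈ U, 0 < apexAreaSq r₁ r₂ y.1 y.2) {ξ : E × E → E}
    (hξ : ContinuousOn ξ U) (hdist : ∀ y ∈ U, dist (ξ y) y.1 = r₁ ∧ dist (ξ y) y.2 = r₂)
    {p : E × E} (hp : p ∈ U)
    (hξp : ω (p.2 - p.1) (ξ p - p.1) = s * √(apexAreaSq r₁ r₂ p.1 p.2)) :
    Set.EqOn ξ (fun y => o.apex s r₁ r₂ y.1 y.2) U := by
  have hω : Set.EqOn (fun y => ω (y.2 - y.1) (ξ y - y.1))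
      (fun y => s * √(apexAreaSq r₁ r₂ y.1 y.2)) U := by
    refine hU.eq_of_sq_eq ?_ ?_ (fun y hy => ?_) (fun {y} hy => ?_) hp hξp
    · simp_rw [← o.inner_rightAngleRotation_left]
      exact ((J : E →L[ℝ] E).continuous.comp (continuous_snd.sub continuous_fst)).continuousOn.inner
        (hξ.sub continuousOn_fst)
    · exact (continuous_const.mul (contDiff_apexAreaSq (n := 0) r₁ r₂).continuous.sqrt).continuousOn
    · simp only [Pi.pow_apply, mul_pow, hs, one_mul, Real.sq_sqrt (hT y hy).le]
      exact o.areaForm_sq_eq_apexAreaSq_of_dist_eq (hdist y hy).1 (hdist y hy).2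
    · have hs₀ : s ≠ 0 := by rintro rfl; norm_num at hs
      exact mul_ne_zero hs₀ (Real.sqrt_pos.mpr (hT y hy)).ne'
  intro y hy
  exact eq_apex_of_dist_eq (ne_of_apexAreaSq_pos (hT y hy)) (hdist y hy).1 (hdist y hy).2 (hω hy)

end Orientation

end Apex

/-- Lemma 3.6 of the paper. If `x₁, x₂, x₃ ∈ ℝ²` form a nondegenerate
triangle, then there is an open neighborhood `U` of `(x₁, x₂)` in `ℝ⁴` and a unique smooth
map `ξ : U → ℝ²` with `ξ(x₁, x₂) = x₃` and `‖ξ(x₁', x₂') - x₁'‖ = ‖x₃ - x₁‖`,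
`‖ξ(x₁', x₂') - x₂'‖ = ‖x₃ - x₂‖` for all `(x₁', x₂') ∈ U`. -/
theorem stmt10 (x1 x2 x3 : Pt)
    (h : LinearIndependent ℝ ![x2 - x1, x3 - x1]) :
    ∃ U : Set (Pt × Pt), IsOpen U ∧ (x1, x2) ∈ U ∧
      ∃ ξ : Pt × Pt → Pt,
        (ContDiffOn ℝ (⊤ : ℕ∞) ξ U ∧ ξ (x1, x2) = x3 ∧
          ∀ y ∈ U, dist (ξ y) y.1 = dist x3 x1 ∧ dist (ξ y) y.2 = dist x3 x2) ∧
        ∀ ξ' : Pt × Pt → Pt,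
          (ContDiffOn ℝ (⊤ : ℕ∞) ξ' U ∧ ξ' (x1, x2) = x3 ∧
            ∀ y ∈ U, dist (ξ' y) y.1 = dist x3 x1 ∧ dist (ξ' y) y.2 = dist x3 x2) →
          Set.EqOn ξ ξ' U := by
  have : Fact (finrank ℝ Pt = 2) := ⟨finrank_euclideanSpace_fin⟩
  let o : Orientation ℝ Pt (Fin 2) := (EuclideanSpace.basisFun (Fin 2) ℝ).toBasis.orientation
  set r₁ := dist x3 x1
  set r₂ := dist x3 x2
  set c := o.areaForm (x2 - x1) (x3 - x1)
  have hc : c ≠ 0 := o.areaForm_ne_zero_of_linearIndependent h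
  have hc_sq : c ^ 2 = apexAreaSq r₁ r₂ x1 x2 := o.areaForm_sq_eq_apexAreaSq_of_dist_eq rfl rfl
  set s := c / |c|
  have hs : s ^ 2 = 1 := by rw [div_pow, sq_abs, div_self (pow_ne_zero 2 hc)]
  have hc_eq : c = s * √(apexAreaSq r₁ r₂ x1 x2) := by
    rw [← hc_sq, Real.sqrt_sq_eq_abs, div_mul_cancel₀ _ (abs_ne_zero.mpr hc)]
  have hT : 0 < apexAreaSq r₁ r₂ x1 x2 := hc_sq ▸ pow_two_pos_of_ne_zero hc
  obtain ⟨ε, hε, hball⟩ := Metric.isOpen_iff.mp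
    (isOpen_lt continuous_const (contDiff_apexAreaSq (n := 0) r₁ r₂).continuous) (x1, x2) hT
  refine ⟨Metric.ball (x1, x2) ε, Metric.isOpen_ball, Metric.mem_ball_self hε,
    fun y => o.apex s r₁ r₂ y.1 y.2, ⟨?_, ?_, ?_⟩, ?_⟩
  · exact fun y hy => (o.contDiffAt_apex s r₁ r₂ (hball hy)).contDiffWithinAt
  · exact (Orientation.eq_apex_of_dist_eq (ne_of_apexAreaSq_pos hT) rfl rfl hc_eq).symm
  · exact fun y hy => Orientation.dist_apex hs dist_nonneg dist_nonneg (hball hy)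
  · rintro ξ' ⟨hξ', hξ'_base, hξ'_dist⟩
    refine (Orientation.eqOn_apex_of_dist_eq hs (convex_ball _ _).isPreconnected
      (fun y hy => hball hy) hξ'.continuousOn hξ'_dist (Metric.mem_ball_self hε) ?_).symm
    rwa [hξ'_base]
end

section
/- Let (G,p) be a line framework with G a triangulated Laman graph and p ∈ P_G. Then the preimage of ρ_G(p) under the distance map equals the SE(2)-orbit of p: ρ_G^{-1}(ρ_G(p)) = O_p. Equivalently, any configuration p' ∈ P_G with ‖x'_i − x'_j‖ = ‖x_i − x_j‖ for all (i,j) ∈ E is congruent to p under a rotation and translation of the plane. -/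
open scoped BigOperators

/-! On a line framework, every vertex added by a Henneberg step lies on the line through its two
parents, at some affine parameter `t`. A configuration with the same edge lengths realizes a
degenerate triangle with the same side lengths, and in an inner product space this forces the new
vertex to sit at the same parameter `t` relative to the images of its parents. Hence such a
configuration is determined by the positions of the first two vertices, and the rigid motion
carrying the first edge of `p` onto that of `q` carries `p` onto `q`. -/

theorem eq_lineMap_of_dist_eq_abs_mul {E : Type*} [NormedAddCommGroup E] [InnerProductSpace ℝ E]
    {x y z : E} {r : ℝ} (hxy : dist x y = |r| * dist x z) (hyz : dist y z = |1 - r| * dist x z) :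
    y = AffineMap.lineMap x z r := by
  set X := y - x
  set Z := z - x
  have hX : ‖X‖ ^ 2 = r ^ 2 * ‖Z‖ ^ 2 := by
    rw [← dist_eq_norm, dist_comm, hxy, dist_eq_norm, norm_sub_rev, mul_pow, sq_abs]
  have hXZ : ‖X‖ ^ 2 - 2 * inner ℝ X Z + ‖Z‖ ^ 2 = (1 - r) ^ 2 * ‖Z‖ ^ 2 := by
    rw [← norm_sub_sq_real, sub_sub_sub_cancel_right, ← dist_eq_norm, hyz, dist_eq_norm,
      norm_sub_rev, mul_pow, sq_abs]
  have hzero : ‖X - r • Z‖ ^ 2 = 0 := by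
    rw [norm_sub_sq_real, norm_smul, real_inner_smul_right, mul_pow, Real.norm_eq_abs, sq_abs]
    linear_combination (1 - r) * hX + r * hXZ
  rw [AffineMap.lineMap_apply, vsub_eq_sub, vadd_eq_add, ← sub_eq_iff_eq_add]
  simpa [sub_eq_zero] using hzero

theorem Matrix.norm_toEuclideanCLM_of_mem_unitaryGroup {𝕜 n : Type*} [RCLike 𝕜] [Fintype n]
    [DecidableEq n] {U : Matrix n n 𝕜} (hU : U ∈ Matrix.unitaryGroup n 𝕜)
    (x : EuclideanSpace 𝕜 n) : ‖Matrix.toEuclideanCLM (n := n) (𝕜 := 𝕜) U x‖ = ‖x‖ :=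
  ContinuousLinearMap.norm_map_of_mem_unitary (Unitary.map_mem _ hU) x

theorem EuclideanSpace.norm_sq_eq_fin_two (x : EuclideanSpace ℝ (Fin 2)) :
    ‖x‖ ^ 2 = x 0 ^ 2 + x 1 ^ 2 := by
  simp [EuclideanSpace.norm_sq_eq, Fin.sum_univ_two, sq_abs]

theorem isRotation_one : IsRotation 1 := ⟨by simp, by simp⟩

theorem isRotation_of_sq_add_sq_eq_one {a b : ℝ} (h : a ^ 2 + b ^ 2 = 1) :
    IsRotation !![a, b; -b, a] := by
  refine ⟨?_, by rw [Matrix.det_fin_two_of]; linear_combination h⟩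
  ext i j
  fin_cases i <;> fin_cases j <;> simp [Matrix.mul_apply, ← h, sq, mul_comm, add_comm]

theorem IsRotation.mem_unitaryGroup {θ : Matrix (Fin 2) (Fin 2) ℝ} (hθ : IsRotation θ) :
    θ ∈ Matrix.unitaryGroup (Fin 2) ℝ :=
  Matrix.mem_unitaryGroup_iff.mpr (by simpa [Matrix.star_eq_conjTranspose] using hθ.1)

theorem exists_isRotation_toEuclideanCLM_eq {u w : Pt} (hu : u ≠ 0) (h : ‖w‖ = ‖u‖) :
    ∃ θ, IsRotation θ ∧ Matrix.toEuclideanCLM (n := Fin 2) (𝕜 := ℝ) θ u = w := by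
  have hN : u 0 ^ 2 + u 1 ^ 2 ≠ 0 := by
    rw [← EuclideanSpace.norm_sq_eq_fin_two]
    exact pow_ne_zero 2 (norm_ne_zero_iff.mpr hu)
  have hw : w 0 ^ 2 + w 1 ^ 2 = u 0 ^ 2 + u 1 ^ 2 := by
    rw [← EuclideanSpace.norm_sq_eq_fin_two, ← EuclideanSpace.norm_sq_eq_fin_two, h]
  -- multiplication by the complex number `w / u`
  refine ⟨!![(w 0 * u 0 + w 1 * u 1) / (u 0 ^ 2 + u 1 ^ 2),
      (w 0 * u 1 - w 1 * u 0) / (u 0 ^ 2 + u 1 ^ 2);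
      -((w 0 * u 1 - w 1 * u 0) / (u 0 ^ 2 + u 1 ^ 2)),
      (w 0 * u 0 + w 1 * u 1) / (u 0 ^ 2 + u 1 ^ 2)], isRotation_of_sq_add_sq_eq_one ?_, ?_⟩
  · field_simp
    linear_combination (u 0 ^ 2 + u 1 ^ 2) * hw
  · ext c
    rw [Matrix.ofLp_toEuclideanCLM, Matrix.mulVec_fin_two]
    fin_cases c <;>
      simp only [Fin.zero_eta, Fin.mk_one, Fin.isValue, Matrix.of_apply, Matrix.cons_val',
        Matrix.cons_val_zero, Matrix.cons_val_one, Matrix.cons_val_fin_one] <;>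
      field_simp <;> ring

theorem exists_isRotation_map_pair {a b a' b' : Pt} (hab : a ≠ b) (h : dist a' b' = dist a b) :
    ∃ θ v, IsRotation θ ∧ Matrix.toEuclideanCLM (n := Fin 2) (𝕜 := ℝ) θ a + v = a' ∧
      Matrix.toEuclideanCLM (n := Fin 2) (𝕜 := ℝ) θ b + v = b' := by
  rw [dist_eq_norm', dist_eq_norm'] at h
  obtain ⟨θ, hθ, hθba⟩ := exists_isRotation_toEuclideanCLM_eq (sub_ne_zero.mpr hab.symm) h
  refine ⟨θ, a' - Matrix.toEuclideanCLM (n := Fin 2) (𝕜 := ℝ) θ a, hθ, by abel, ?_⟩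
  rw [map_sub] at hθba
  linear_combination (norm := module) hθba

section Configurations

variable {ι : Type*}

theorem Conf.ext_pt {p q : Conf ι} (h : ∀ i, pt p i = pt q i) : p = q := by
  ext ⟨i, c⟩
  exact congrArg (· c) (h i)

theorem pt_se2Act (θ : Matrix (Fin 2) (Fin 2) ℝ) (v : Pt) (p : Conf ι) (i : ι) :
    pt (se2Act θ v p) i = Matrix.toEuclideanCLM (n := Fin 2) (𝕜 := ℝ) θ (pt p i) + v :=
  rfl

theorem IsRotation.dist_pt_se2Act {θ : Matrix (Fin 2) (Fin 2) ℝ} (hθ : IsRotation θ) (v : Pt)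
    (p : Conf ι) (i j : ι) :
    dist (pt (se2Act θ v p) i) (pt (se2Act θ v p) j) = dist (pt p i) (pt p j) := by
  rw [pt_se2Act, pt_se2Act, dist_add_right, dist_eq_norm, dist_eq_norm, ← map_sub,
    Matrix.norm_toEuclideanCLM_of_mem_unitaryGroup hθ.mem_unitaryGroup]

theorem mem_se2Orbit_of_subsingleton [Subsingleton ι] (p q : Conf ι) : q ∈ se2Orbit p := by
  rcases isEmpty_or_nonempty ι with _ | ⟨⟨i₀⟩⟩
  · exact ⟨1, 0, isRotation_one, Conf.ext_pt isEmptyElim⟩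
  · refine ⟨1, pt q i₀ - pt p i₀, isRotation_one, Conf.ext_pt fun i => ?_⟩
    rw [pt_se2Act, map_one, one_apply_eq_self, Subsingleton.elim i i₀, add_sub_cancel]

end Configurations

namespace Henneberg

variable {ι : Type*} {G : SimpleGraph ι} (H : Henneberg G)

def first : Fin (Nat.card ι) := ⟨0, by have := H.two_le; omega⟩

def second : Fin (Nat.card ι) := ⟨1, by have := H.two_le; omega⟩

theorem adj_first_second : G.Adj (H.ord H.first) (H.ord H.second) :=
  (H.edge_iff _ _).mpr (Or.inl rfl)

theorem adj_par1 {l : Fin (Nat.card ι)} (hl : 2 ≤ (l : ℕ)) :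
    G.Adj (H.ord (H.par1 l)) (H.ord l) :=
  (H.edge_iff _ _).mpr (Or.inr ⟨l, hl, Or.inl rfl⟩)

theorem adj_par2 {l : Fin (Nat.card ι)} (hl : 2 ≤ (l : ℕ)) :
    G.Adj (H.ord (H.par2 l)) (H.ord l) :=
  (H.edge_iff _ _).mpr (Or.inr ⟨l, hl, Or.inr rfl⟩)

variable {p : Conf ι}

theorem exists_pt_eq_lineMap (hp : p ∈ configSpace G)
    (hline : Collinear ℝ (Set.range (pt p))) {l : Fin (Nat.card ι)} (hl : 2 ≤ (l : ℕ)) :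
    ∃ t : ℝ, ∀ q : Conf ι,
      (∀ i j, G.Adj i j → dist (pt q i) (pt q j) = dist (pt p i) (pt p j)) →
      pt q (H.ord l) = AffineMap.lineMap (pt q (H.ord (H.par1 l))) (pt q (H.ord (H.par2 l))) t := by
  have hab := H.par_adj l hl
  have hmem : pt p (H.ord l) ∈ line[ℝ, pt p (H.ord (H.par1 l)), pt p (H.ord (H.par2 l))] :=
    hline.mem_affineSpan_of_mem_of_ne (Set.mem_range_self _) (Set.mem_range_self _)
      (Set.mem_range_self _) (hp _ _ hab)
  obtain ⟨t, ht⟩ := mem_affineSpan_pair_iff_exists_lineMap_eq.mp hmem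
  refine ⟨t, fun q hq => eq_lineMap_of_dist_eq_abs_mul ?_ ?_⟩
  · rw [hq _ _ (H.adj_par1 hl), hq _ _ hab, ← ht, dist_left_lineMap, Real.norm_eq_abs]
  · rw [dist_comm, hq _ _ (H.adj_par2 hl), hq _ _ hab, ← ht, dist_comm, dist_lineMap_right,
      Real.norm_eq_abs]

theorem eq_of_dist_eq (hp : p ∈ configSpace G) (hline : Collinear ℝ (Set.range (pt p)))
    {q q' : Conf ι} (hq : ∀ i j, G.Adj i j → dist (pt q i) (pt q j) = dist (pt p i) (pt p j))
    (hq' : ∀ i j, G.Adj i j → dist (pt q' i) (pt q' j) = dist (pt p i) (pt p j))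
    (h₀ : pt q (H.ord H.first) = pt q' (H.ord H.first))
    (h₁ : pt q (H.ord H.second) = pt q' (H.ord H.second)) :
    q = q' := by
  suffices h : ∀ l, pt q (H.ord l) = pt q' (H.ord l) from
    Conf.ext_pt fun i => by simpa using h (H.ord.symm i)
  intro l
  induction l using WellFoundedLT.induction with
  | _ l ih =>
    by_cases hl : 2 ≤ (l : ℕ)
    · obtain ⟨t, ht⟩ := H.exists_pt_eq_lineMap hp hline hl
      rw [ht q hq, ht q' hq', ih _ (H.par1_lt l hl), ih _ (H.par2_lt l hl)]
    · obtain rfl | rfl : l = H.first ∨ l = H.second := by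
        simp only [first, second, Fin.ext_iff]
        omega
      exacts [h₀, h₁]

end Henneberg

/-- Lemma 3.7 of the paper. If `(G, p)` is a line framework with `G` a
triangulated Laman graph, then the configurations in `P_G` realizing the same edge lengths
as `p` are exactly the configurations in the SE(2)-orbit of `p`:
`ρ_G⁻¹(ρ_G(p)) = O_p`. -/
theorem stmt11 {ι : Type*} [Fintype ι] (G : SimpleGraph ι)
    (hG : IsTriangulatedLaman G) (p : Conf ι) (hp : p ∈ configSpace G)
    (hline : Collinear ℝ (Set.range (pt p))) :
    {q | q ∈ configSpace G ∧
      ∀ i j : ι, G.Adj i j → dist (pt q i) (pt q j) = dist (pt p i) (pt p j)}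
      = se2Orbit p := by
  ext q
  constructor
  · rintro ⟨-, hq⟩
    rcases hG with hcard | hH
    · have : Subsingleton ι := Finite.card_le_one_iff_subsingleton.mp hcard
      exact mem_se2Orbit_of_subsingleton p q
    · obtain ⟨H⟩ := hH
      obtain ⟨θ, v, hθ, h₀, h₁⟩ :=
        exists_isRotation_map_pair (hp _ _ H.adj_first_second) (hq _ _ H.adj_first_second)
      exact ⟨θ, v, hθ, H.eq_of_dist_eq hp hline hq (fun i j _ => hθ.dist_pt_se2Act v p i j)
        h₀.symm h₁.symm⟩
  · rintro ⟨θ, v, hθ, rfl⟩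
    refine ⟨fun i j hij => ?_, fun i j _ => hθ.dist_pt_se2Act v p i j⟩
    rw [← dist_pos, hθ.dist_pt_se2Act, dist_pos]
    exact hp i j hij
end
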